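/- arXiv:2508.20956 — 3 statements merged into one kernel-verified Lean document; each statement's English description precedes it below -/
import Mathlib

section
/- If the upper triangular operator matrix M_C = [[A, C],[0, B]] is Fredholm, then A is Fredholm if and only if B is Fredholm. -/
/-!
For `M = [[A, C], [0, B]]` the snake lemma gives the exact sequence
`0 → ker A → ker M → ker B → coker A → coker M → coker B → 0`, whose connecting map
`ker B → coker A` is `y ↦ [C y]`. Hence `ker A` and `coker B` are no larger than `ker M` and
`coker M`, while `dim ker B ≤ dim coker A + dim ker M` and
`dim coker A ≤ dim coker M + dim ker B`.
So when `M` is Fredholm, `coker A` is finite-dimensional iff `ker B` is.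
-/

open ContinuousLinearMap Cardinal

noncomputable section

universe u

/-- nullity: dimension of the kernel, as a cardinal -/
def alphaDim {E F : Type u} [NormedAddCommGroup E] [NormedSpace ℂ E]
    [NormedAddCommGroup F] [NormedSpace ℂ F] (T : E →L[ℂ] F) : Cardinal :=
  Module.rank ℂ (LinearMap.ker (T : E →ₗ[ℂ] F))

/-- deficiency: dimension of the cokernel, as a cardinal -/
def betaDim {E F : Type u} [NormedAddCommGroup E] [NormedSpace ℂ E]
    [NormedAddCommGroup F] [NormedSpace ℂ F] (T : E →L[ℂ] F) : Cardinal :=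
  Module.rank ℂ (F ⧸ LinearMap.range (T : E →ₗ[ℂ] F))

/-- the upper triangular operator matrix [[A, C],[0, B]] acting on H ⊕ K -/
def MC {H K : Type u} [NormedAddCommGroup H] [NormedSpace ℂ H]
    [NormedAddCommGroup K] [NormedSpace ℂ K]
    (A : H →L[ℂ] H) (B : K →L[ℂ] K) (C : K →L[ℂ] H) : (H × K) →L[ℂ] (H × K) :=
  (A.comp (fst ℂ H K) + C.comp (snd ℂ H K)).prod (B.comp (snd ℂ H K))

/-- T - λ -/
def shf {E : Type u} [NormedAddCommGroup E] [NormedSpace ℂ E]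
    (T : E →L[ℂ] E) (l : ℂ) : E →L[ℂ] E := T - l • ContinuousLinearMap.id ℂ E

/-- Fredholm left invertible spectrum -/
def sigmaFLI {E : Type u} [NormedAddCommGroup E] [NormedSpace ℂ E]
    (T : E →L[ℂ] E) : Set ℂ :=
  {l | ¬ (Function.Injective (shf T l) ∧ betaDim (shf T l) < ℵ₀)}

/-- Fredholm right invertible spectrum -/
def sigmaFRI {E : Type u} [NormedAddCommGroup E] [NormedSpace ℂ E]
    (T : E →L[ℂ] E) : Set ℂ :=
  {l | ¬ (Function.Surjective (shf T l) ∧ alphaDim (shf T l) < ℵ₀)}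

/-- polynomially convex hull: the set together with the bounded components of its complement -/
def polyHull (S : Set ℂ) : Set ℂ :=
  S ∪ {z | z ∉ S ∧ Bornology.IsBounded (connectedComponentIn Sᶜ z)}

namespace LinearMap

variable {R : Type*} {V V' W W' : Type u} [DivisionRing R]
  [AddCommGroup V] [Module R V] [AddCommGroup V'] [Module R V']
  [AddCommGroup W] [Module R W] [AddCommGroup W'] [Module R W']
  (A : V →ₗ[R] V') (B : W →ₗ[R] W') (C : W →ₗ[R] V')

def upperTriangular : V × W →ₗ[R] V' × W' :=
  (A ∘ₗ fst R V W + C ∘ₗ snd R V W).prod (B ∘ₗ snd R V W)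

@[simp]
theorem upperTriangular_apply (x : V) (y : W) :
    upperTriangular A B C (x, y) = (A x + C y, B y) := rfl

def kerUpperTriangularProj : ker (upperTriangular A B C) →ₗ[R] ker B :=
  codRestrict (ker B) (snd R V W ∘ₗ (ker (upperTriangular A B C)).subtype) fun z =>
    congrArg Prod.snd (mem_ker.mp z.2)

def upperTriangularConnecting : ker B →ₗ[R] V' ⧸ range A :=
  (range A).mkQ ∘ₗ C ∘ₗ (ker B).subtype

theorem range_le_comap_inl_range_upperTriangular :
    range A ≤ (range (upperTriangular A B C)).comap (inl R V' W') := by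
  rintro _ ⟨x, rfl⟩
  exact ⟨(x, 0), by simp⟩

theorem ker_upperTriangularConnecting_le :
    ker (upperTriangularConnecting A B C) ≤ range (kerUpperTriangularProj A B C) := by
  rintro ⟨y, hy⟩ hδy
  obtain ⟨x, hx⟩ : C y ∈ range A := by
    simpa [upperTriangularConnecting, Submodule.Quotient.mk_eq_zero] using hδy
  have hBy : B y = 0 := hy
  exact ⟨⟨(-x, y), by simp [hx, hBy]⟩, rfl⟩

theorem ker_mapQ_inl_le_range_upperTriangularConnecting :
    ker ((range A).mapQ _ (inl R V' W') (range_le_comap_inl_range_upperTriangular A B C)) ≤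
      range (upperTriangularConnecting A B C) := by
  intro q hq
  obtain ⟨x, rfl⟩ := (range A).mkQ_surjective q
  obtain ⟨⟨u, v⟩, huv⟩ : (x, (0 : W')) ∈ range (upperTriangular A B C) := by
    simpa [Submodule.Quotient.mk_eq_zero] using hq
  simp only [upperTriangular_apply, Prod.mk.injEq] at huv
  refine ⟨⟨v, huv.2⟩, ?_⟩
  simp only [upperTriangularConnecting, coe_comp, Function.comp_apply, Submodule.coe_subtype,
    Submodule.mkQ_apply, ← huv.1, Submodule.Quotient.mk_add]
  rw [(Submodule.Quotient.mk_eq_zero _).mpr (mem_range_self A u), zero_add]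

theorem rank_ker_left_le_rank_ker_upperTriangular :
    Module.rank R (ker A) ≤ Module.rank R (ker (upperTriangular A B C)) := by
  let i : ker A →ₗ[R] ker (upperTriangular A B C) :=
    codRestrict _ (inl R V W ∘ₗ (ker A).subtype) fun x => by simp [mem_ker.mp x.2]
  refine rank_le_of_injective i fun x y hxy => ?_
  exact Subtype.ext (congrArg (fun z : ker (upperTriangular A B C) => (z : V × W).1) hxy)

theorem rank_coker_right_le_rank_coker_upperTriangular :
    Module.rank R (W' ⧸ range B) ≤
      Module.rank R ((V' × W') ⧸ range (upperTriangular A B C)) := by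
  have hsnd : range (upperTriangular A B C) ≤ (range B).comap (snd R V' W') := by
    rintro _ ⟨⟨x, y⟩, rfl⟩
    exact ⟨y, rfl⟩
  refine rank_le_of_surjective ((range _).mapQ _ _ hsnd) fun q => ?_
  obtain ⟨y, rfl⟩ := (range B).mkQ_surjective q
  exact ⟨Submodule.Quotient.mk (0, y), rfl⟩

theorem rank_ker_right_le_rank_coker_left_add_rank_ker_upperTriangular :
    Module.rank R (ker B) ≤
      Module.rank R (V' ⧸ range A) + Module.rank R (ker (upperTriangular A B C)) := by
  rw [← rank_range_add_rank_ker (upperTriangularConnecting A B C)]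
  gcongr
  · exact Submodule.rank_le _
  · exact (Submodule.rank_mono (ker_upperTriangularConnecting_le A B C)).trans
      (rank_range_le _)

theorem rank_coker_left_le_rank_coker_upperTriangular_add_rank_ker_right :
    Module.rank R (V' ⧸ range A) ≤
      Module.rank R ((V' × W') ⧸ range (upperTriangular A B C)) + Module.rank R (ker B) := by
  rw [← rank_range_add_rank_ker ((range A).mapQ (range (upperTriangular A B C)) (inl R V' W')
    (range_le_comap_inl_range_upperTriangular A B C))]
  gcongr
  · exact Submodule.rank_le _
  · exact (Submodule.rank_mono (ker_mapQ_inl_le_range_upperTriangularConnecting A B C)).trans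
      (rank_range_le _)

end LinearMap

variable {H K : Type u}
  [NormedAddCommGroup H] [InnerProductSpace ℂ H] [CompleteSpace H]
  [NormedAddCommGroup K] [InnerProductSpace ℂ K] [CompleteSpace K]

theorem stmt_8 (A : H →L[ℂ] H) (B : K →L[ℂ] K) (C : K →L[ℂ] H)
    (h : alphaDim (MC A B C) < ℵ₀ ∧ betaDim (MC A B C) < ℵ₀) :
    ((alphaDim A < ℵ₀ ∧ betaDim A < ℵ₀) ↔ (alphaDim B < ℵ₀ ∧ betaDim B < ℵ₀)) := by
  obtain ⟨hαM, hβM⟩ := h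
  simp only [alphaDim, betaDim] at hαM hβM ⊢
  have hαA := (LinearMap.rank_ker_left_le_rank_ker_upperTriangular _ _ _).trans_lt hαM
  have hβB := (LinearMap.rank_coker_right_le_rank_coker_upperTriangular _ _ _).trans_lt hβM
  constructor
  · rintro ⟨-, hβA⟩
    exact ⟨(LinearMap.rank_ker_right_le_rank_coker_left_add_rank_ker_upperTriangular
      _ _ _).trans_lt (add_lt_aleph0 hβA hαM), hβB⟩
  · rintro ⟨hαB, -⟩
    exact ⟨hαA, (LinearMap.rank_coker_left_le_rank_coker_upperTriangular_add_rank_ker_right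
      _ _ _).trans_lt (add_lt_aleph0 hβM hαB)⟩
end
end

section
/- Suppose A is left invertible, B is lower semi-Fredholm, and either dim ker(B) ≤ dim coker(A) < ∞ or dim ker(B) = dim coker(A) = ∞. Then there exists a bounded operator C : K → H such that the operator matrix M_C = [[A, C],[0, B]] is injective with finite-codimensional range (FLI). -/
open ContinuousLinearMap Cardinal

noncomputable section

universe u

/-! Let `U = range A`, closed by hypothesis, `V = Uᗮ` and `N = ker B`, so that `dim V = β(A)` and
`dim N = α(B)`. The dimension hypothesis yields an injective operator `T : N → V` with
finite-codimensional range: any linear injection when `V` is finite-dimensional, and an isometric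
isomorphism when `N` and `V` are both separable and infinite-dimensional (both are then `ℓ²(ℕ)`).
Take `C = T ∘ P_N`. If `(A x + C y, B y) = 0` then `y ∈ N` and `A x = -T y ∈ U ∩ V = 0`, so
`x = 0` and `y = 0`. As `C` vanishes on `Nᗮ`, the range of `M_C` contains `(U + T N) × range B`,
whose codimension is `codim_V (T N) + β(B) < ∞`. -/

universe v

open Function

lemma Orthonormal.countable_of_separableSpace {𝕜 E ι : Type*} [RCLike 𝕜] [NormedAddCommGroup E]
    [InnerProductSpace 𝕜 E] [TopologicalSpace.SeparableSpace E] {v : ι → E}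
    (hv : Orthonormal 𝕜 v) : Countable ι := by
  refine Pairwise.countable_of_isOpen_disjoint (s := fun i => Metric.ball (v i) 2⁻¹) ?_
    (fun _ => Metric.isOpen_ball) (fun i => ⟨v i, Metric.mem_ball_self (by norm_num)⟩)
  intro i j hij
  apply Metric.ball_disjoint_ball
  have hdist : ‖v i - v j‖ ^ 2 = 2 := by
    rw [@norm_sub_sq 𝕜, hv.1 i, hv.1 j, hv.2 hij]
    norm_num
  rw [dist_eq_norm]
  nlinarith [norm_nonneg (v i - v j)]

section SeparableHilbert

variable {𝕜 E F : Type*} [RCLike 𝕜]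
  [NormedAddCommGroup E] [InnerProductSpace 𝕜 E] [CompleteSpace E]
  [TopologicalSpace.SeparableSpace E]
  [NormedAddCommGroup F] [InnerProductSpace 𝕜 F] [CompleteSpace F]
  [TopologicalSpace.SeparableSpace F]

lemma nonempty_hilbertBasis_nat (hE : ¬ FiniteDimensional 𝕜 E) : Nonempty (HilbertBasis ℕ 𝕜 E) := by
  obtain ⟨w, b, -⟩ := exists_hilbertBasis 𝕜 E
  have : Countable w := b.orthonormal.countable_of_separableSpace
  have : Infinite w := by
    by_contra hfin
    have : Fintype w := @Fintype.ofFinite w (not_infinite_iff_finite.1 hfin)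
    exact hE (Module.Finite.of_basis b.toOrthonormalBasis.toBasis)
  obtain ⟨_⟩ := nonempty_denumerable w
  let e : ℕ ≃ w := (Denumerable.eqv w).symm
  refine ⟨HilbertBasis.mk (b.orthonormal.comp e e.injective) ?_⟩
  rw [EquivLike.range_comp]
  exact b.dense_span.ge

lemma nonempty_linearIsometryEquiv_of_separable (hE : ¬ FiniteDimensional 𝕜 E)
    (hF : ¬ FiniteDimensional 𝕜 F) : Nonempty (E ≃ₗᵢ[𝕜] F) := by
  obtain ⟨bE⟩ := nonempty_hilbertBasis_nat hE
  obtain ⟨bF⟩ := nonempty_hilbertBasis_nat hF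
  exact ⟨bE.repr.trans bF.repr.symm⟩

end SeparableHilbert

lemma Submodule.rank_quotient_sup_map_subtype_le {R M : Type*} [Ring R] [AddCommGroup M]
    [Module R M] {U V : Submodule R M} (h : U ⊔ V = ⊤) (W : Submodule R V) :
    Module.rank R (M ⧸ (U ⊔ W.map V.subtype)) ≤ Module.rank R (V ⧸ W) := by
  refine LinearMap.rank_le_of_surjective
    (W.mapQ _ V.subtype (fun w hw => mem_sup_right (mem_map_of_mem hw))) ?_
  intro q
  induction q using Submodule.Quotient.induction_on with | H m => ?_
  obtain ⟨u, hu, v, hv, rfl⟩ := mem_sup.1 (h ▸ mem_top : m ∈ U ⊔ V)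
  refine ⟨Quotient.mk ⟨v, hv⟩, ?_⟩
  rw [mapQ_apply, Quotient.eq]
  simpa using neg_mem (mem_sup_left hu)

lemma Submodule.rank_quotient_prod {K : Type*} {M N : Type v} [DivisionRing K] [AddCommGroup M]
    [Module K M] [AddCommGroup N] [Module K N] (p : Submodule K M) (q : Submodule K N) :
    Module.rank K ((M × N) ⧸ p.prod q) = Module.rank K (M ⧸ p) + Module.rank K (N ⧸ q) := by
  have hsurj : Surjective (p.mkQ.prodMap q.mkQ) :=
    Prod.map_surjective.2 ⟨p.mkQ_surjective, q.mkQ_surjective⟩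
  have hker : LinearMap.ker (p.mkQ.prodMap q.mkQ) = p.prod q := by
    rw [LinearMap.ker_prodMap, ker_mkQ, ker_mkQ]
  rw [← hker, (LinearMap.quotKerEquivOfSurjective _ hsurj).rank_eq, rank_prod']

section OperatorMatrix

variable {H K : Type u} [NormedAddCommGroup H] [NormedSpace ℂ H] [NormedAddCommGroup K]
  [NormedSpace ℂ K] {A : H →L[ℂ] H} {B : K →L[ℂ] K} {C : K →L[ℂ] H}

@[simp]
lemma MC_apply (x : H) (y : K) : MC A B C (x, y) = (A x + C y, B y) := rfl

lemma injective_MC (hA : Injective A)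
    (hC : ∀ y, B y = 0 → C y ∈ LinearMap.range (A : H →ₗ[ℂ] H) → y = 0) :
    Injective (MC A B C) := by
  refine (injective_iff_map_eq_zero _).2 ?_
  rintro ⟨x, y⟩ h
  simp only [MC_apply, Prod.mk_eq_zero] at h
  obtain rfl : y = 0 := hC y h.2 ⟨-x, by simp [eq_neg_of_add_eq_zero_right h.1]⟩
  simpa using hA (by simpa using h.1 : A x = A 0)

lemma prod_le_range_MC
    (hC : LinearMap.ker (B : K →ₗ[ℂ] K) ⊔ LinearMap.ker (C : K →ₗ[ℂ] H) = ⊤) :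
    (LinearMap.range (A : H →ₗ[ℂ] H) ⊔ (LinearMap.ker (B : K →ₗ[ℂ] K)).map (C : K →ₗ[ℂ] H)).prod
      (LinearMap.range (B : K →ₗ[ℂ] K)) ≤ LinearMap.range (MC A B C : (H × K) →ₗ[ℂ] (H × K)) := by
  rintro ⟨_, _⟩ ⟨hu, v, rfl⟩
  obtain ⟨_, ⟨x, rfl⟩, _, ⟨n, hn, rfl⟩, rfl⟩ := Submodule.mem_sup.1 hu
  obtain ⟨m, hm, w, hw, rfl⟩ := Submodule.mem_sup.1 (hC ▸ Submodule.mem_top : v ∈ _)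
  refine ⟨(x, n + w), ?_⟩
  simp_all [LinearMap.mem_ker]

lemma betaDim_MC_le
    (hC : LinearMap.ker (B : K →ₗ[ℂ] K) ⊔ LinearMap.ker (C : K →ₗ[ℂ] H) = ⊤) :
    betaDim (MC A B C) ≤ Module.rank ℂ (H ⧸ (LinearMap.range (A : H →ₗ[ℂ] H) ⊔
      (LinearMap.ker (B : K →ₗ[ℂ] K)).map (C : K →ₗ[ℂ] H))) + betaDim B :=
  (LinearMap.rank_le_of_surjective (Submodule.factor (prod_le_range_MC hC))
    (Submodule.factor_surjective _)).trans_eq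
    (Submodule.rank_quotient_prod _ _)

end OperatorMatrix

section FredholmLeftInvertible

variable {E F : Type u} [NormedAddCommGroup E] [NormedSpace ℂ E] [NormedAddCommGroup F]
  [NormedSpace ℂ F]

lemma betaDim_eq_zero_of_surjective {T : E →L[ℂ] F} (hT : Surjective T) : betaDim T = 0 := by
  rw [betaDim, LinearMap.range_eq_top.2 hT]
  exact rank_subsingleton' _ _

lemma exists_injective_betaDim_lt_of_finiteDimensional [FiniteDimensional ℂ F]
    (h : Module.rank ℂ E ≤ Module.rank ℂ F) :
    ∃ T : E →L[ℂ] F, Injective T ∧ betaDim T < ℵ₀ := by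
  have : FiniteDimensional ℂ E :=
    Module.rank_lt_aleph0_iff.1 (h.trans_lt (Module.rank_lt_aleph0 ℂ F))
  obtain ⟨f, hf⟩ := rank_le_iff_exists_linearMap.1 h
  exact ⟨LinearMap.toContinuousLinearMap f, hf,
    (rank_quotient_le _).trans_lt (Module.rank_lt_aleph0 ℂ F)⟩

end FredholmLeftInvertible

lemma exists_injective_betaDim_lt_of_separable {E F : Type u}
    [NormedAddCommGroup E] [InnerProductSpace ℂ E] [CompleteSpace E]
    [TopologicalSpace.SeparableSpace E] [NormedAddCommGroup F] [InnerProductSpace ℂ F]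
    [CompleteSpace F] [TopologicalSpace.SeparableSpace F]
    (h : (Module.rank ℂ E ≤ Module.rank ℂ F ∧ Module.rank ℂ F < ℵ₀) ∨
      (ℵ₀ ≤ Module.rank ℂ E ∧ ℵ₀ ≤ Module.rank ℂ F)) :
    ∃ T : E →L[ℂ] F, Injective T ∧ betaDim T < ℵ₀ := by
  rcases h with ⟨hle, hF⟩ | ⟨hE, hF⟩
  · have := Module.rank_lt_aleph0_iff.1 hF
    exact exists_injective_betaDim_lt_of_finiteDimensional hle
  · obtain ⟨e⟩ := nonempty_linearIsometryEquiv_of_separable (𝕜 := ℂ) (E := E) (F := F)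
      (fun h => (Module.rank_lt_aleph0_iff.2 h).not_ge hE)
      (fun h => (Module.rank_lt_aleph0_iff.2 h).not_ge hF)
    refine ⟨e.toContinuousLinearEquiv, e.injective, ?_⟩
    rw [betaDim_eq_zero_of_surjective e.surjective]
    exact aleph0_pos

lemma Submodule.rank_orthogonal_eq_rank_quotient {𝕜 E : Type*} [RCLike 𝕜] [NormedAddCommGroup E]
    [InnerProductSpace 𝕜 E] (U : Submodule 𝕜 E) [U.HasOrthogonalProjection] :
    Module.rank 𝕜 Uᗮ = Module.rank 𝕜 (E ⧸ U) :=
  (quotientEquivOfIsCompl U Uᗮ U.isCompl_orthogonal).rank_eq.symm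

variable {H K : Type u}
  [NormedAddCommGroup H] [InnerProductSpace ℂ H] [CompleteSpace H]
  [NormedAddCommGroup K] [InnerProductSpace ℂ K] [CompleteSpace K]

lemma exists_injective_MC_betaDim_le {A : H →L[ℂ] H} {B : K →L[ℂ] K}
    (hA : Injective A ∧ IsClosed (Set.range A))
    (T : LinearMap.ker (B : K →ₗ[ℂ] K) →L[ℂ] (LinearMap.range (A : H →ₗ[ℂ] H))ᗮ)
    (hT : Injective T) :
    ∃ C : K →L[ℂ] H, Injective (MC A B C) ∧ betaDim (MC A B C) ≤ betaDim T + betaDim B := by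
  let U := LinearMap.range (A : H →ₗ[ℂ] H)
  let N := LinearMap.ker (B : K →ₗ[ℂ] K)
  have : CompleteSpace U := hA.2.completeSpace_coe
  have : CompleteSpace N := B.isClosed_ker.completeSpace_coe
  let C : K →L[ℂ] H := Uᗮ.subtypeL ∘L T ∘L N.orthogonalProjectionOnto
  have hCN (y : N) : C y = T y := by
    simp [C, Submodule.orthogonalProjectionOnto_mem_subspace_eq_self]
  have hker : N ⊔ LinearMap.ker (C : K →ₗ[ℂ] H) = ⊤ := by
    refine eq_top_iff.2 (N.isCompl_orthogonal.sup_eq_top.ge.trans (sup_le_sup_left ?_ N))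
    intro y hy
    simp [C, Submodule.orthogonalProjectionOnto_apply_of_mem_orthogonal hy]
  have hmap : N.map (C : K →ₗ[ℂ] H) = (LinearMap.range (T : N →ₗ[ℂ] Uᗮ)).map Uᗮ.subtype := by
    have hCT : (C : K →ₗ[ℂ] H) ∘ₗ N.subtype = Uᗮ.subtype ∘ₗ (T : N →ₗ[ℂ] Uᗮ) :=
      LinearMap.ext hCN
    rw [← LinearMap.range_comp, ← hCT, LinearMap.range_comp, Submodule.range_subtype]
  refine ⟨C, injective_MC hA.1 fun y hy hCy => ?_, (betaDim_MC_le hker).trans ?_⟩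
  · have hTy : (T ⟨y, hy⟩ : H) = 0 :=
      Submodule.disjoint_def.1 U.orthogonal_disjoint _ (hCN ⟨y, hy⟩ ▸ hCy) (T ⟨y, hy⟩).2
    exact congrArg Subtype.val (hT (Subtype.ext hTy |>.trans (map_zero T).symm) : _ = (0 : N))
  · rw [hmap]
    gcongr
    exact Submodule.rank_quotient_sup_map_subtype_le U.isCompl_orthogonal.sup_eq_top _

theorem stmt_10_general
  [TopologicalSpace.SeparableSpace H] [TopologicalSpace.SeparableSpace K]
    (A : H →L[ℂ] H) (B : K →L[ℂ] K)
    (hA : Function.Injective A ∧ IsClosed (Set.range A)) (hB : betaDim B < ℵ₀)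
    (hc : (alphaDim B ≤ betaDim A ∧ betaDim A < ℵ₀) ∨ (ℵ₀ ≤ alphaDim B ∧ ℵ₀ ≤ betaDim A)) :
    ∃ C : K →L[ℂ] H, Function.Injective (MC A B C) ∧ betaDim (MC A B C) < ℵ₀ := by
  have : CompleteSpace (LinearMap.range (A : H →ₗ[ℂ] H)) := hA.2.completeSpace_coe
  rw [alphaDim, betaDim, ← Submodule.rank_orthogonal_eq_rank_quotient] at hc
  obtain ⟨T, hT, hTβ⟩ := exists_injective_betaDim_lt_of_separable hc
  obtain ⟨C, hinj, hβ⟩ := exists_injective_MC_betaDim_le hA T hT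
  exact ⟨C, hinj, hβ.trans_lt (add_lt_aleph0 hTβ hB)⟩

theorem stmt_10
  [TopologicalSpace.SeparableSpace H] [TopologicalSpace.SeparableSpace K]
    (hH : ¬ FiniteDimensional ℂ H) (hK : ¬ FiniteDimensional ℂ K)
    (A : H →L[ℂ] H) (B : K →L[ℂ] K)
    (hA : Function.Injective A ∧ IsClosed (Set.range A)) (hB : betaDim B < ℵ₀)
    (hc : (alphaDim B ≤ betaDim A ∧ betaDim A < ℵ₀) ∨ (ℵ₀ ≤ alphaDim B ∧ ℵ₀ ≤ betaDim A)) :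
    ∃ C : K →L[ℂ] H, Function.Injective (MC A B C) ∧ betaDim (MC A B C) < ℵ₀ :=
  stmt_10_general A B hA hB hc
end
end

section
/- For all A ∈ B(H), B ∈ B(K) and every C ∈ B(K,H): σ_FLI(A) ∪ σ_FLI(B) = σ_FLI(M_C) ∪ W, where W = {λ ∈ ρ_l(A) ∩ ρ_SF−(B) : dim ker(B−λ) = dim coker(A−λ) = ∞} ∪ {λ ∈ ρ_l(A) ∩ ρ_SF−(B) : 0 < dim ker(B−λ) ≤ dim coker(A−λ) < ∞}. -/
/-!
The operator matrix `M = [[A, C], [0, B]]` has the exact sequence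
`ker B → coker A → coker M → coker B → 0` (induced by `y ↦ C y`, `x ↦ (x, 0)` and the second
projection), and its connecting map `ker B → coker A` is injective when `M` is. Hence
`β(B) ≤ β(M) ≤ β(A) + β(B)`, `β(A) ≤ α(B) + β(M)`, and `α(B) ≤ β(A)` for injective `M`.
The analytic input is that an injective operator between Banach spaces with finite-codimensional
range is bounded below (open mapping theorem for `T` plus the inclusion of a finite-dimensional
complement of its range); if `M` is bounded below then so is `A`. With these,
`λ ∉ σ_FLI(A) ∪ σ_FLI(B)` holds exactly when `λ ∉ σ_FLI(M_C)` and `B - λ` is injective, and `W`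
consists of the points where the latter fails.
-/

open ContinuousLinearMap Cardinal

noncomputable section

universe u

theorem rank_le_rank_add_rank_of_ker_le_range {R : Type*} {X Y Z : Type u} [DivisionRing R]
    [AddCommGroup X] [Module R X] [AddCommGroup Y] [Module R Y] [AddCommGroup Z] [Module R Z]
    (f : X →ₗ[R] Y) (g : Y →ₗ[R] Z) (h : LinearMap.ker g ≤ LinearMap.range f) :
    Module.rank R Y ≤ Module.rank R X + Module.rank R Z := by
  rw [← g.rank_range_add_rank_ker, add_comm]
  gcongr
  · exact (Submodule.rank_mono h).trans (rank_range_le f)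
  · exact Submodule.rank_le _

theorem alphaDim_eq_zero_iff {E F : Type u} [NormedAddCommGroup E] [NormedSpace ℂ E]
    [NormedAddCommGroup F] [NormedSpace ℂ F] (T : E →L[ℂ] F) :
    alphaDim T = 0 ↔ Function.Injective T :=
  Submodule.rank_eq_zero.trans LinearMap.ker_eq_bot

theorem exists_antilipschitzWith_of_injective_of_betaDim_lt {E F : Type u}
    [NormedAddCommGroup E] [NormedSpace ℂ E] [CompleteSpace E]
    [NormedAddCommGroup F] [NormedSpace ℂ F] [CompleteSpace F]
    (T : E →L[ℂ] F) (hT : Function.Injective T) (hβ : betaDim T < ℵ₀) :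
    ∃ K, AntilipschitzWith K T := by
  obtain ⟨S, hS⟩ := Submodule.exists_isCompl (LinearMap.range (T : E →ₗ[ℂ] F))
  have : FiniteDimensional ℂ S := Module.rank_lt_aleph0_iff.mp <| by
    rwa [← (Submodule.quotientEquivOfIsCompl _ S hS).rank_eq]
  let Φ : (E × S) →L[ℂ] F := T.coprod S.subtypeL
  have hker : LinearMap.ker (Φ : (E × S) →ₗ[ℂ] F) = ⊥ := by
    refine (Submodule.eq_bot_iff _).mpr fun ⟨x, s⟩ hxs => ?_
    have hTx : T x = -s := eq_neg_of_add_eq_zero_left hxs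
    have hTx0 : T x = 0 :=
      (Submodule.disjoint_def.mp hS.disjoint) _ ⟨x, rfl⟩ (hTx ▸ neg_mem s.2)
    have hx : x = 0 := hT (hTx0.trans (map_zero T).symm)
    ext <;> simp_all
  have hrange : LinearMap.range (Φ : (E × S) →ₗ[ℂ] F) = ⊤ := by
    refine Submodule.eq_top_iff'.mpr fun y => ?_
    obtain ⟨_, v, ⟨x, rfl⟩, hv, rfl⟩ := Submodule.codisjoint_iff_exists_add_eq.mp hS.codisjoint y
    exact ⟨(x, ⟨v, hv⟩), rfl⟩
  let e := ContinuousLinearEquiv.ofBijective Φ hker hrange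
  have hTe : ⇑T = e ∘ LinearIsometry.inl ℂ E S := funext fun x => by simp [e, Φ]
  exact ⟨_, hTe ▸ e.antilipschitz.comp (LinearIsometry.inl ℂ E S).isometry.antilipschitz⟩

namespace MC

variable {E F : Type u} [NormedAddCommGroup E] [NormedSpace ℂ E]
  [NormedAddCommGroup F] [NormedSpace ℂ F] (A : E →L[ℂ] E) (B : F →L[ℂ] F) (C : F →L[ℂ] E)

theorem apply (x : E) (y : F) : MC A B C (x, y) = (A x + C y, B y) := rfl

theorem shf_eq (l : ℂ) : shf (MC A B C) l = MC (shf A l) (shf B l) C := by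
  refine ContinuousLinearMap.ext fun ⟨x, y⟩ => ?_
  simp [shf, apply, add_sub_right_comm]

theorem injective (hA : Function.Injective A) (hB : Function.Injective B) :
    Function.Injective (MC A B C) := by
  rintro ⟨x, y⟩ ⟨x', y'⟩ h
  simp only [apply, Prod.mk.injEq] at h
  obtain rfl := hB h.2
  exact Prod.ext (hA (add_right_cancel h.1)) rfl

theorem antilipschitzWith_left {K : NNReal} (h : AntilipschitzWith K (MC A B C)) :
    AntilipschitzWith K A :=
  A.antilipschitz_of_bound fun x => by
    simpa [apply, Prod.norm_def] using h.le_mul_norm (f := MC A B C) (map_zero _) (x, 0)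

def cokerInl :
    E ⧸ LinearMap.range (A : E →ₗ[ℂ] E) →ₗ[ℂ]
      (E × F) ⧸ LinearMap.range (MC A B C : (E × F) →ₗ[ℂ] (E × F)) :=
  Submodule.mapQ _ _ (LinearMap.inl ℂ E F) <| by
    rintro _ ⟨x, rfl⟩
    exact ⟨(x, 0), by simp [apply]⟩

def cokerSnd :
    (E × F) ⧸ LinearMap.range (MC A B C : (E × F) →ₗ[ℂ] (E × F)) →ₗ[ℂ]
      F ⧸ LinearMap.range (B : F →ₗ[ℂ] F) :=
  Submodule.mapQ _ _ (LinearMap.snd ℂ E F) <| by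
    rintro _ ⟨⟨x, y⟩, rfl⟩
    exact ⟨y, rfl⟩

def connecting : LinearMap.ker (B : F →ₗ[ℂ] F) →ₗ[ℂ] E ⧸ LinearMap.range (A : E →ₗ[ℂ] E) :=
  (LinearMap.range (A : E →ₗ[ℂ] E)).mkQ ∘ₗ (C : F →ₗ[ℂ] E) ∘ₗ (LinearMap.ker _).subtype

theorem cokerSnd_surjective : Function.Surjective (cokerSnd A B C) := by
  rintro ⟨y⟩
  exact ⟨Submodule.Quotient.mk (0, y), rfl⟩

theorem ker_cokerSnd_le_range_cokerInl :
    LinearMap.ker (cokerSnd A B C) ≤ LinearMap.range (cokerInl A B C) := by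
  rintro ⟨⟨x, _⟩⟩ h
  obtain ⟨y, rfl⟩ := (Submodule.Quotient.mk_eq_zero _).mp h
  refine ⟨Submodule.Quotient.mk (x - C y), (Submodule.Quotient.eq _).mpr ⟨(0, -y), ?_⟩⟩
  simp [apply]

theorem ker_cokerInl_le_range_connecting :
    LinearMap.ker (cokerInl A B C) ≤ LinearMap.range (connecting A B C) := by
  rintro ⟨u⟩ h
  obtain ⟨⟨x, y⟩, hxy⟩ := (Submodule.Quotient.mk_eq_zero _).mp h
  simp only [coe_coe, apply, LinearMap.inl_apply, Prod.mk.injEq] at hxy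
  refine ⟨⟨y, hxy.2⟩, (Submodule.Quotient.eq _).mpr ⟨-x, ?_⟩⟩
  simp [← hxy.1]

theorem connecting_injective (hM : Function.Injective (MC A B C)) :
    Function.Injective (connecting A B C) := by
  refine (injective_iff_map_eq_zero _).mpr fun ⟨y, hy⟩ h => ?_
  obtain ⟨x, hx : A x = C y⟩ := (Submodule.Quotient.mk_eq_zero _).mp h
  have hBy : B y = 0 := hy
  have : MC A B C (-x, y) = MC A B C 0 := by
    simp [apply, hx, hBy]
  simpa using congrArg Prod.snd (hM this)

theorem betaDim_right_le : betaDim B ≤ betaDim (MC A B C) :=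
  LinearMap.rank_le_of_surjective _ (cokerSnd_surjective A B C)

theorem betaDim_le_add : betaDim (MC A B C) ≤ betaDim A + betaDim B :=
  rank_le_rank_add_rank_of_ker_le_range _ _ (ker_cokerSnd_le_range_cokerInl A B C)

theorem betaDim_left_le : betaDim A ≤ alphaDim B + betaDim (MC A B C) :=
  rank_le_rank_add_rank_of_ker_le_range _ _ (ker_cokerInl_le_range_connecting A B C)

theorem alphaDim_le_betaDim (hM : Function.Injective (MC A B C)) : alphaDim B ≤ betaDim A :=
  LinearMap.rank_le_of_injective _ (connecting_injective A B C hM)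

end MC
section Banach

variable {E F : Type u} [NormedAddCommGroup E] [NormedSpace ℂ E] [CompleteSpace E]
  [NormedAddCommGroup F] [NormedSpace ℂ F] [CompleteSpace F]

theorem MC.injective_betaDim_lt_iff (A : E →L[ℂ] E) (B : F →L[ℂ] F) (C : F →L[ℂ] E) :
    ((Function.Injective A ∧ betaDim A < ℵ₀) ∧ (Function.Injective B ∧ betaDim B < ℵ₀)) ↔
    ((Function.Injective (MC A B C) ∧ betaDim (MC A B C) < ℵ₀) ∧
      ¬((Function.Injective A ∧ IsClosed (Set.range A)) ∧
          betaDim B < ℵ₀ ∧ ℵ₀ ≤ alphaDim B ∧ ℵ₀ ≤ betaDim A) ∧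
      ¬((Function.Injective A ∧ IsClosed (Set.range A)) ∧
          betaDim B < ℵ₀ ∧ 0 < alphaDim B ∧ alphaDim B ≤ betaDim A ∧ betaDim A < ℵ₀)) := by
  constructor
  · rintro ⟨⟨hA, hβA⟩, hB, hβB⟩
    have hαB : alphaDim B = 0 := (alphaDim_eq_zero_iff B).mpr hB
    exact ⟨⟨MC.injective A B C hA hB, (MC.betaDim_le_add A B C).trans_lt (add_lt_aleph0 hβA hβB)⟩,
      fun h => h.2.2.2.not_gt hβA, fun h => h.2.2.1.ne' hαB⟩
  · rintro ⟨⟨hM, hβM⟩, hW₁, hW₂⟩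
    obtain ⟨K, hMK⟩ := exists_antilipschitzWith_of_injective_of_betaDim_lt _ hM hβM
    have hAK := MC.antilipschitzWith_left A B C hMK
    have hA : Function.Injective A ∧ IsClosed (Set.range A) :=
      ⟨hAK.injective, hAK.isClosed_range A.uniformContinuous⟩
    have hβB := (MC.betaDim_right_le A B C).trans_lt hβM
    have hβA : betaDim A < ℵ₀ := by
      by_contra! h
      have hαB : alphaDim B < ℵ₀ := not_le.mp fun h' => hW₁ ⟨hA, hβB, h', h⟩
      exact h.not_gt ((MC.betaDim_left_le A B C).trans_lt (add_lt_aleph0 hαB hβM))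
    have hαB : alphaDim B = 0 := by
      by_contra h
      exact hW₂ ⟨hA, hβB, pos_iff_ne_zero.mpr h, MC.alphaDim_le_betaDim A B C hM, hβA⟩
    exact ⟨⟨hA.1, hβA⟩, (alphaDim_eq_zero_iff B).mp hαB, hβB⟩

end Banach

variable {H K : Type u}
  [NormedAddCommGroup H] [InnerProductSpace ℂ H] [CompleteSpace H]
  [NormedAddCommGroup K] [InnerProductSpace ℂ K] [CompleteSpace K]

theorem stmt_18_general
    (A : H →L[ℂ] H) (B : K →L[ℂ] K) (C : K →L[ℂ] H) :
    sigmaFLI A ∪ sigmaFLI B = sigmaFLI (MC A B C) ∪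
      ({l : ℂ | (Function.Injective (shf A l) ∧ IsClosed (Set.range (shf A l))) ∧
          betaDim (shf B l) < ℵ₀ ∧ ℵ₀ ≤ alphaDim (shf B l) ∧ ℵ₀ ≤ betaDim (shf A l)} ∪
       {l : ℂ | (Function.Injective (shf A l) ∧ IsClosed (Set.range (shf A l))) ∧
          betaDim (shf B l) < ℵ₀ ∧ 0 < alphaDim (shf B l) ∧
          alphaDim (shf B l) ≤ betaDim (shf A l) ∧ betaDim (shf A l) < ℵ₀}) := by
  ext l
  have h := MC.injective_betaDim_lt_iff (shf A l) (shf B l) C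
  simp only [Set.mem_union, sigmaFLI, Set.mem_ofPred_eq, MC.shf_eq]
  tauto

theorem stmt_18
  [TopologicalSpace.SeparableSpace H] [TopologicalSpace.SeparableSpace K]
    (hH : ¬ FiniteDimensional ℂ H) (hK : ¬ FiniteDimensional ℂ K)
    (A : H →L[ℂ] H) (B : K →L[ℂ] K) (C : K →L[ℂ] H) :
    sigmaFLI A ∪ sigmaFLI B = sigmaFLI (MC A B C) ∪
      ({l : ℂ | (Function.Injective (shf A l) ∧ IsClosed (Set.range (shf A l))) ∧
          betaDim (shf B l) < ℵ₀ ∧ ℵ₀ ≤ alphaDim (shf B l) ∧ ℵ₀ ≤ betaDim (shf A l)} ∪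
       {l : ℂ | (Function.Injective (shf A l) ∧ IsClosed (Set.range (shf A l))) ∧
          betaDim (shf B l) < ℵ₀ ∧ 0 < alphaDim (shf B l) ∧
          alphaDim (shf B l) ≤ betaDim (shf A l) ∧ betaDim (shf A l) < ℵ₀}) :=
  stmt_18_general A B C
end
end
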